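/- If G is a finite connected block graph, then μ(G ⊠ P_2) = n(G) + μ(G). -/

import Mathlib

open SimpleGraph

/-- Vertices `x` and `y` are `X`-visible in `G`: some shortest `x,y`-path has
no internal vertex in `X`. -/
def Visible {V : Type*} (G : SimpleGraph V) (X : Set V) (x y : V) : Prop :=
  ∃ p : G.Walk x y, p.length = G.dist x y ∧ ∀ v ∈ p.support, v ∈ X → v = x ∨ v = y

/-- `X` is a mutual-visibility set of `G`: every two vertices of `X` are `X`-visible. -/
def IsMVSet {V : Type*} (G : SimpleGraph V) (X : Set V) : Prop :=
  ∀ x ∈ X, ∀ y ∈ X, Visible G X x y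

/-- `X` is a total mutual-visibility set of `G`: every two vertices of `G` are
`X`-visible. -/
def IsTMVSet {V : Type*} (G : SimpleGraph V) (X : Set V) : Prop :=
  ∀ x y : V, Visible G X x y

/-- The mutual-visibility number of `G`: the maximum cardinality of a
mutual-visibility set. -/
noncomputable def mu {V : Type*} (G : SimpleGraph V) : ℕ :=
  sSup {n | ∃ X : Set V, IsMVSet G X ∧ X.ncard = n}

/-- The total mutual-visibility number of `G`: the maximum cardinality of a total
mutual-visibility set. -/
noncomputable def muT {V : Type*} (G : SimpleGraph V) : ℕ :=
  sSup {n | ∃ X : Set V, IsTMVSet G X ∧ X.ncard = n}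

/-- A feasible total mutual-visibility set: a total mutual-visibility set `S` such that
any two adjacent vertices of `S` have a common neighbor outside `S`. -/
def IsFeasibleTMVSet {V : Type*} (G : SimpleGraph V) (S : Set V) : Prop :=
  IsTMVSet G S ∧ ∀ x ∈ S, ∀ y ∈ S, G.Adj x y → ∃ z ∉ S, G.Adj x z ∧ G.Adj y z

/-- The strong product of two simple graphs. -/
def strongProd {α β : Type*} (G : SimpleGraph α) (H : SimpleGraph β) :
    SimpleGraph (α × β) where
  Adj x y := (G.Adj x.1 y.1 ∧ x.2 = y.2) ∨ (x.1 = y.1 ∧ H.Adj x.2 y.2) ∨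
    (G.Adj x.1 y.1 ∧ H.Adj x.2 y.2)
  symm := ⟨by
    rintro ⟨a, b⟩ ⟨c, d⟩ (⟨h1, h2⟩ | ⟨h1, h2⟩ | ⟨h1, h2⟩)
    · exact Or.inl ⟨h1.symm, h2.symm⟩
    · exact Or.inr (Or.inl ⟨h1.symm, h2.symm⟩)
    · exact Or.inr (Or.inr ⟨h1.symm, h2.symm⟩)⟩
  loopless := ⟨by
    rintro ⟨a, b⟩ (⟨h, _⟩ | ⟨_, h⟩ | ⟨h, _⟩)
    · exact G.irrefl h
    · exact H.irrefl h
    · exact G.irrefl h⟩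

/-- The iterated (associative) strong product of a finite family of graphs:
two tuples are adjacent iff they are distinct and agree or are adjacent in every
coordinate. -/
def strongProdPi {k : ℕ} {V : Fin k → Type*} (G : ∀ i, SimpleGraph (V i)) :
    SimpleGraph (∀ i, V i) where
  Adj x y := x ≠ y ∧ ∀ i, x i = y i ∨ (G i).Adj (x i) (y i)
  symm := ⟨by
    rintro x y ⟨hne, h⟩
    exact ⟨hne.symm, fun i => (h i).imp Eq.symm fun hh => (G i).adj_symm hh⟩⟩
  loopless := ⟨fun x h => h.1 rfl⟩

/-- A universal vertex: adjacent to all other vertices. -/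
def IsUniversal {V : Type*} (G : SimpleGraph V) (v : V) : Prop :=
  ∀ u : V, u ≠ v → G.Adj v u

/-- A cut vertex: its removal disconnects the graph. -/
def IsCutVertex {V : Type*} (G : SimpleGraph V) (v : V) : Prop :=
  ¬ (G.induce ({v}ᶜ : Set V)).Preconnected

/-- An induced path: a path with no chords between its vertices. -/
def IsInducedPath {V : Type*} (G : SimpleGraph V) {u v : V} (p : G.Walk u v) : Prop :=
  p.IsPath ∧ ∀ a b : V, a ∈ p.support → b ∈ p.support → G.Adj a b → s(a, b) ∈ p.edges

/-- A block graph: a connected graph in which every pair of vertices is joined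
by a unique induced path. -/
def IsBlockGraph {V : Type*} (G : SimpleGraph V) : Prop :=
  G.Connected ∧ ∀ u v : V, ∃! p : G.Walk u v, IsInducedPath G p

/-- A convex set of vertices: every shortest path of `G` between two of its
vertices stays inside the set. -/
def IsConvexSet {V : Type*} (G : SimpleGraph V) (A : Set V) : Prop :=
  ∀ x ∈ A, ∀ y ∈ A, ∀ p : G.Walk x y, p.length = G.dist x y → ∀ v ∈ p.support, v ∈ A

/-- A cactus graph: a connected graph in which every edge lies in at most one cycle,
i.e. two cycles sharing an edge have the same edge set. -/
def IsCactus {V : Type*} (G : SimpleGraph V) : Prop :=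
  G.Connected ∧ ∀ (v : V) (p q : G.Walk v v), p.IsCycle → q.IsCycle →
    ∀ e, e ∈ p.edges → e ∈ q.edges → ∀ e', e' ∈ p.edges ↔ e' ∈ q.edges

/-- A cograph: obtained from a single vertex by repeatedly adding twins, i.e. there is
an enumeration of the vertices in which every vertex except the first is, at the
moment of its addition, a (true or false) twin of some earlier vertex in the induced
subgraph on the vertices added so far. -/
def IsCograph {V : Type*} (G : SimpleGraph V) : Prop :=
  ∃ l : List V, l.Nodup ∧ (∀ v : V, v ∈ l) ∧
    ∀ i : Fin l.length, (i : ℕ) ≠ 0 →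
      ∃ j : Fin l.length, (j : ℕ) < (i : ℕ) ∧
        ∀ z ∈ l.take ((i : ℕ) + 1), z ≠ l.get i → z ≠ l.get j →
          (G.Adj (l.get i) z ↔ G.Adj (l.get j) z)

/-- An enabling vertex: a vertex `v` adjacent to every vertex `u` of `G - v` whose
degree in `G - v` is less than `n(G) - 2`. -/
def IsEnabling {V : Type*} [Fintype V] (G : SimpleGraph V) (v : V) : Prop :=
  ∀ u : V, u ≠ v → (G.neighborSet u \ {v}).ncard < Fintype.card V - 2 → G.Adj v u

/-!
A non-cut vertex `z` of a block graph is simplicial: for two non-adjacent neighbours `a`, `b`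
of `z`, the path `a z b` and an induced `a,b`-path avoiding `z` would be two induced paths.
Hence no shortest path passes through a non-cut vertex, and the non-cut vertices form a total
mutual-visibility set. Conversely, in any connected graph every cut vertex `v` of a
mutual-visibility set `X` cuts off a non-cut vertex outside `X` from the rest of `X`; these
witnesses are distinct, so `|X|` is at most the number of non-cut vertices, which is thus `μ(G)`.

In `G ⊠ P₂`, projecting shortest paths shows that the two layers `T₀`, `T₁` of a
mutual-visibility set `T` meet in a mutual-visibility set of `G`, so
`|T| = |T₀ ∪ T₁| + |T₀ ∩ T₁| ≤ n(G) + μ(G)`. In the other direction, one full layer together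
with the copy of a total mutual-visibility set `X` of `G` in the other layer is a (total)
mutual-visibility set: lift a shortest path of `G` avoiding `X` so that its interior runs in
the second layer.
-/

section

variable {V : Type*} {G : SimpleGraph V}

lemma visible_self (X : Set V) (x : V) : Visible G X x x :=
  ⟨.nil, by simp, by simp⟩

lemma SimpleGraph.Adj.visible {x y : V} (h : G.Adj x y) (X : Set V) : Visible G X x y :=
  ⟨h.toWalk, by simp [dist_eq_one_iff_adj.mpr h], by simp⟩

lemma IsTMVSet.isMVSet {X : Set V} (hX : IsTMVSet G X) : IsMVSet G X :=
  fun x _ y _ => hX x y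

lemma IsMVSet.ncard_le_mu [Finite V] {X : Set V} (hX : IsMVSet G X) : X.ncard ≤ mu G :=
  le_csSup ⟨Nat.card V, by rintro _ ⟨Y, -, rfl⟩; exact Y.ncard_le_card⟩ ⟨X, hX, rfl⟩

lemma mu_le_of_forall_ncard_le {n : ℕ} (h : ∀ X : Set V, IsMVSet G X → X.ncard ≤ n) :
    mu G ≤ n :=
  csSup_le ⟨0, ∅, by simp [IsMVSet]⟩ (by rintro _ ⟨X, hX, rfl⟩; exact h X hX)

lemma SimpleGraph.Walk.exists_walk_of_adj_imp {W : Type*} {G' : SimpleGraph W} (f : V → W)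
    (hf : ∀ x y, G.Adj x y → f x = f y ∨ G'.Adj (f x) (f y)) {u v : V} (p : G.Walk u v) :
    ∃ q : G'.Walk (f u) (f v), q.length ≤ p.length ∧ q.support ⊆ p.support.map f := by
  induction p with
  | nil => exact ⟨.nil, by simp, by simp⟩
  | @cons x y z h p ih =>
    obtain ⟨q, hlen, hsupp⟩ := ih
    rcases hf x y h with hxy | hxy
    · refine ⟨q.copy hxy.symm rfl, by simp; omega, ?_⟩
      simpa using List.subset_cons_of_subset _ hsupp
    · exact ⟨.cons hxy q, by simp [hlen], by simpa using List.cons_subset_cons _ hsupp⟩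

lemma strongProd_pathGraph_two_adj {x y : V × Fin 2} :
    (strongProd G (pathGraph 2)).Adj x y ↔ x ≠ y ∧ (x.1 = y.1 ∨ G.Adj x.1 y.1) := by
  obtain ⟨a, i⟩ := x
  obtain ⟨b, j⟩ := y
  have hP : (pathGraph 2).Adj i j ↔ i ≠ j := by
    rw [pathGraph_adj]; omega
  simp only [strongProd, hP, ne_eq, Prod.mk.injEq]
  by_cases hab : a = b
  · subst hab; simp
  · have := G.ne_of_adj (a := a) (b := b)
    tauto

lemma strongProd_pathGraph_two_adj_of_adj {a b : V} (h : G.Adj a b) (i j : Fin 2) :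
    (strongProd G (pathGraph 2)).Adj (a, i) (b, j) :=
  strongProd_pathGraph_two_adj.mpr ⟨by simp [h.ne], Or.inr h⟩

lemma exists_walk_strongProd_pathGraph_two {a b : V} (q : G.Walk a b) (hq : q.IsPath)
    (hab : a ≠ b) (i j : Fin 2) :
    ∃ p : (strongProd G (pathGraph 2)).Walk (a, i) (b, j), p.length = q.length ∧
      ∀ z ∈ p.support, z = (a, i) ∨ z = (b, j) ∨
        (z.2 = 1 ∧ z.1 ∈ q.support ∧ z.1 ≠ a ∧ z.1 ≠ b) := by
  induction q generalizing i with
  | nil => exact absurd rfl hab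
  | @cons a c b h q ih =>
    have ha : a ∉ q.support := ((Walk.cons_isPath_iff h q).mp hq).2
    by_cases hcb : c = b
    · subst hcb
      obtain rfl : q = .nil := (Walk.isPath_iff_nil.mp hq.of_cons).eq_nil
      exact ⟨.cons (strongProd_pathGraph_two_adj_of_adj h i j) .nil, by simp, by simp⟩
    · obtain ⟨p, hlen, hsupp⟩ := ih hq.of_cons hcb 1
      refine ⟨.cons (strongProd_pathGraph_two_adj_of_adj h i 1) p, by simp [hlen], ?_⟩
      simp only [Walk.support_cons, List.mem_cons, forall_eq_or_imp, true_or, true_and]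
      intro z hz
      rcases hsupp z hz with rfl | rfl | ⟨hz1, hzq, -, hzb⟩
      · exact Or.inr (Or.inr ⟨rfl, by simp, h.ne.symm, hcb⟩)
      · exact Or.inr (Or.inl rfl)
      · exact Or.inr (Or.inr ⟨hz1, by simp [hzq], fun h' => ha (h' ▸ hzq), hzb⟩)

lemma SimpleGraph.Walk.exists_walk_fst {x y : V × Fin 2}
    (p : (strongProd G (pathGraph 2)).Walk x y) :
    ∃ q : G.Walk x.1 y.1, q.length ≤ p.length ∧ q.support ⊆ p.support.map Prod.fst :=
  p.exists_walk_of_adj_imp Prod.fst fun _ _ h => (strongProd_pathGraph_two_adj.mp h).2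

lemma dist_strongProd_pathGraph_two {a b : V} (hab : a ≠ b) (i j : Fin 2) :
    (strongProd G (pathGraph 2)).dist (a, i) (b, j) = G.dist a b := by
  by_cases hr : G.Reachable a b
  · obtain ⟨q, hq, hqlen⟩ := hr.exists_path_of_dist
    obtain ⟨p, hplen, -⟩ := exists_walk_strongProd_pathGraph_two q hq hab i j
    obtain ⟨w, hw⟩ := p.reachable.exists_walk_length_eq_dist
    obtain ⟨q', hq'len, -⟩ := w.exists_walk_fst
    have := dist_le p
    have := dist_le q'
    simp only at this
    omega
  · have hr' : ¬ (strongProd G (pathGraph 2)).Reachable (a, i) (b, j) :=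
      fun ⟨w⟩ => hr ⟨w.exists_walk_fst.choose⟩
    rw [dist_eq_zero_of_not_reachable hr, dist_eq_zero_of_not_reachable hr']

lemma Set.ncard_eq_ncard_slice_zero_add_ncard_slice_one [Finite V] (T : Set (V × Fin 2)) :
    T.ncard = {a | (a, 0) ∈ T}.ncard + {a | (a, 1) ∈ T}.ncard := by
  have layer (i : Fin 2) : {a | (a, i) ∈ T}.ncard = (T ∩ {z | z.2 = i}).ncard := by
    rw [← Set.ncard_preimage_of_injective_subset_range (f := fun a => (a, i))
      (fun _ _ h => congrArg Prod.fst h) (by rintro ⟨a, j⟩ ⟨-, rfl⟩; exact ⟨a, rfl⟩)]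
    simp [Set.preimage]
  have hdiff : T \ {z | z.2 = 0} = T ∩ {z | z.2 = 1} := by
    ext ⟨a, i⟩; fin_cases i <;> simp
  rw [layer, layer, ← hdiff, Set.ncard_inter_add_ncard_sdiff_eq_ncard]

lemma IsMVSet.isMVSet_inter_layers {T : Set (V × Fin 2)}
    (hT : IsMVSet (strongProd G (pathGraph 2)) T) :
    IsMVSet G {a | (a, 0) ∈ T ∧ (a, 1) ∈ T} := by
  rintro a ⟨ha, -⟩ b ⟨-, hb⟩
  obtain rfl | hab := eq_or_ne a b
  · exact visible_self _ a
  obtain ⟨p, hplen, hpX⟩ := hT _ ha _ hb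
  obtain ⟨q, hqlen, hqsupp⟩ := p.exists_walk_fst
  refine ⟨q, le_antisymm ?_ (dist_le q), fun v hv hvX => ?_⟩
  · rw [← dist_strongProd_pathGraph_two hab 0 1]
    omega
  obtain ⟨⟨v, i⟩, hvp, rfl⟩ := List.mem_map.mp (hqsupp hv)
  have hvT : (v, i) ∈ T := by fin_cases i; exacts [hvX.1, hvX.2]
  rcases hpX _ hvp hvT with h | h <;> simp_all

lemma IsMVSet.ncard_le_card_add_mu [Finite V] {T : Set (V × Fin 2)}
    (hT : IsMVSet (strongProd G (pathGraph 2)) T) : T.ncard ≤ Nat.card V + mu G := by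
  rw [Set.ncard_eq_ncard_slice_zero_add_ncard_slice_one, ← Set.ncard_union_add_ncard_inter]
  gcongr
  · exact Set.ncard_le_card _
  · exact hT.isMVSet_inter_layers.ncard_le_mu

lemma IsTMVSet.strongProd_pathGraph_two {X : Set V} (hX : IsTMVSet G X) :
    IsTMVSet (strongProd G (pathGraph 2)) {z | z.2 = 0 ∨ z.1 ∈ X} := by
  rintro ⟨a, i⟩ ⟨b, j⟩
  obtain rfl | hab := eq_or_ne a b
  · obtain rfl | hij := eq_or_ne i j
    · exact visible_self _ _
    · have hadj : (strongProd G (pathGraph 2)).Adj (a, i) (a, j) :=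
        strongProd_pathGraph_two_adj.mpr ⟨fun h => hij (congrArg Prod.snd h), Or.inl rfl⟩
      exact hadj.visible _
  obtain ⟨q, hqlen, hqX⟩ := hX a b
  obtain ⟨p, hplen, hpsupp⟩ :=
    exists_walk_strongProd_pathGraph_two q (q.isPath_of_length_eq_dist hqlen) hab i j
  refine ⟨p, by rw [hplen, hqlen, dist_strongProd_pathGraph_two hab], fun z hz hzS => ?_⟩
  rcases hpsupp z hz with h | h | ⟨hz1, hzq, hza, hzb⟩
  · exact Or.inl h
  · exact Or.inr h
  · have hzX : z.1 ∈ X := hzS.resolve_left (by simp [hz1])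
    exact ((hqX _ hzq hzX).elim hza hzb).elim

lemma IsTMVSet.card_add_ncard_le_mu_strongProd [Finite V] {X : Set V} (hX : IsTMVSet G X) :
    Nat.card V + X.ncard ≤ mu (strongProd G (pathGraph 2)) := by
  have h := hX.strongProd_pathGraph_two.isMVSet.ncard_le_mu
  rw [Set.ncard_eq_ncard_slice_zero_add_ncard_slice_one] at h
  simpa [Set.ncard_univ] using h

namespace SimpleGraph

def ReachableAvoiding (G : SimpleGraph V) (v a b : V) : Prop :=
  ∃ p : G.Walk a b, v ∉ p.support

namespace ReachableAvoiding

variable {v a b c : V}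

lemma refl (h : a ≠ v) : G.ReachableAvoiding v a a :=
  ⟨.nil, by simpa using h.symm⟩

lemma ne_left (h : G.ReachableAvoiding v a b) : a ≠ v := by
  rintro rfl
  obtain ⟨p, hp⟩ := h
  exact hp p.start_mem_support

lemma symm (h : G.ReachableAvoiding v a b) : G.ReachableAvoiding v b a :=
  let ⟨p, hp⟩ := h
  ⟨p.reverse, by simpa using hp⟩

lemma trans (h : G.ReachableAvoiding v a b) (h' : G.ReachableAvoiding v b c) :
    G.ReachableAvoiding v a c :=
  let ⟨p, hp⟩ := h
  let ⟨q, hq⟩ := h'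
  ⟨p.append q, by simp [Walk.mem_support_append_iff, hp, hq]⟩

end ReachableAvoiding

lemma reachableAvoiding_iff_reachable_induce {v : V} {a b : ↥({v}ᶜ : Set V)} :
    G.ReachableAvoiding v a b ↔ (G.induce {v}ᶜ).Reachable a b := by
  constructor
  · rintro ⟨p, hp⟩
    exact ⟨p.induce {v}ᶜ fun x hx => by rintro rfl; exact hp hx⟩
  · rintro ⟨p⟩
    have hv : v ∉ (p.map (Embedding.induce {v}ᶜ).toHom).support := by
      rw [Walk.support_map]
      simp
    exact ⟨_, hv⟩

end SimpleGraph

lemma isCutVertex_iff {v : V} :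
    IsCutVertex G v ↔ ∃ a b, a ≠ v ∧ b ≠ v ∧ ¬ G.ReachableAvoiding v a b := by
  constructor
  · intro hv
    by_contra! h
    exact hv fun a b => reachableAvoiding_iff_reachable_induce.mp (h a b a.2 b.2)
  · rintro ⟨a, b, ha, hb, hab⟩ hv
    exact hab <|
      (reachableAvoiding_iff_reachable_induce (a := ⟨a, ha⟩) (b := ⟨b, hb⟩)).mpr (hv _ _)

lemma IsMVSet.reachableAvoiding {X : Set V} (hX : IsMVSet G X) {v x y : V} (hv : v ∈ X)
    (hx : x ∈ X) (hy : y ∈ X) (hxv : x ≠ v) (hyv : y ≠ v) : G.ReachableAvoiding v x y := by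
  obtain ⟨p, -, hpX⟩ := hX x hx y hy
  exact ⟨p, fun hvp => (hpX v hvp hv).elim (fun h => hxv h.symm) fun h => hyv h.symm⟩

/-- A vertex of the branch of `w` at `v` that is farthest from `v` is not a cut vertex: the
other side of it would contain vertices that are even farther. -/
lemma SimpleGraph.Connected.exists_not_isCutVertex_reachableAvoiding [Finite V]
    (hG : G.Connected) {v w : V} (hwv : w ≠ v) :
    ∃ s, ¬ IsCutVertex G s ∧ G.ReachableAvoiding v s w := by
  classical
  obtain ⟨s, hsw, hmax⟩ := Set.Finite.exists_maximalFor (G.dist v)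
    {s | G.ReachableAvoiding v s w} (Set.toFinite _) ⟨w, .refl hwv⟩
  refine ⟨s, fun hs => ?_, hsw⟩
  obtain ⟨a, b, has, hbs, hab⟩ := isCutVertex_iff.mp hs
  have hsv : s ≠ v := hsw.ne_left
  obtain ⟨u, hus, hu⟩ : ∃ u, u ≠ s ∧ ¬ G.ReachableAvoiding s u v := by
    by_contra! h
    exact hab ((h a has).trans (h b hbs).symm)
  obtain ⟨p, hp, hplen⟩ := (hG.preconnected u v).exists_path_of_dist
  have hsp : s ∈ p.support := by
    by_contra h
    exact hu ⟨p, h⟩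
  have huw : G.ReachableAvoiding v u w :=
    .trans ⟨p.takeUntil s hsp, Walk.endpoint_notMem_support_takeUntil hp hsp hsv.symm⟩ hsw
  have hfar : G.dist v s < G.dist v u := by
    calc G.dist v s = G.dist s v := dist_comm
      _ ≤ (p.dropUntil s hsp).length := dist_le _
      _ < p.length := Walk.length_dropUntil_lt_length hsp hus.symm
      _ = G.dist v u := hplen.trans dist_comm
  have := hmax huw hfar.le
  omega

/-- The vertices of `X \ {v}` see each other, so they lie in a single branch at `v`; any other
branch supplies the non-cut vertex. -/
lemma IsMVSet.exists_not_isCutVertex_separated [Finite V] (hG : G.Connected) {X : Set V}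
    (hX : IsMVSet G X) {v : V} (hv : IsCutVertex G v) (hvX : v ∈ X) :
    ∃ s, ¬ IsCutVertex G s ∧ ∀ x ∈ X, x ≠ v → ¬ G.ReachableAvoiding v s x := by
  obtain ⟨a, b, hav, hbv, hab⟩ := isCutVertex_iff.mp hv
  obtain ⟨w, hwv, hw⟩ : ∃ w, w ≠ v ∧ ∀ x ∈ X, x ≠ v → ¬ G.ReachableAvoiding v w x := by
    by_cases h : ∃ x ∈ X, x ≠ v ∧ G.ReachableAvoiding v a x
    · obtain ⟨x, hx, hxv, hax⟩ := h
      exact ⟨b, hbv, fun y hy hyv hby =>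
        hab (hax.trans ((hX.reachableAvoiding hvX hx hy hxv hyv).trans hby.symm))⟩
    · exact ⟨a, hav, fun x hx hxv hax => h ⟨x, hx, hxv, hax⟩⟩
  obtain ⟨s, hs, hsw⟩ := hG.exists_not_isCutVertex_reachableAvoiding hwv
  exact ⟨s, hs, fun x hx hxv hsx => hw x hx hxv (hsw.symm.trans hsx)⟩

lemma SimpleGraph.Reachable.reachableAvoiding_or {s v v' : V} (h : G.Reachable s v)
    (hvv' : v ≠ v') :
    G.ReachableAvoiding v s v' ∨ G.ReachableAvoiding v' s v := by
  classical
  obtain ⟨p, hp⟩ := h.exists_isPath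
  by_cases hv' : v' ∈ p.support
  · exact Or.inl ⟨p.takeUntil v' hv', Walk.endpoint_notMem_support_takeUntil hp hv' hvv'⟩
  · exact Or.inr ⟨p, hv'⟩

/-- Sending each cut vertex of `X` to a non-cut vertex outside `X` that it separates from the
rest of `X` is injective. -/
lemma IsMVSet.ncard_le_ncard_not_isCutVertex [Finite V] (hG : G.Connected) {X : Set V}
    (hX : IsMVSet G X) : X.ncard ≤ {v | ¬ IsCutVertex G v}.ncard := by
  set N := {v | ¬ IsCutVertex G v}
  have key : ∀ v ∈ X \ N, ∃ s, s ∈ N \ X ∧ ∀ x ∈ X, x ≠ v → ¬ G.ReachableAvoiding v s x := by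
    rintro v ⟨hvX, hv⟩
    obtain ⟨s, hs, hsep⟩ := hX.exists_not_isCutVertex_separated hG (not_not.mp hv) hvX
    have hsv : s ≠ v := fun h => hv (h ▸ hs)
    exact ⟨s, ⟨hs, fun hsX => hsep s hsX hsv (.refl hsv)⟩, hsep⟩
  choose! f hfN hf using key
  have hinj : Set.InjOn f (X \ N) := by
    intro v hv v' hv' hff
    by_contra hvv'
    rcases (hG.preconnected (f v) v).reachableAvoiding_or hvv' with h | h
    · exact hf v hv v' hv'.1 (Ne.symm hvv') h
    · exact hf v' hv' v hv.1 hvv' (hff ▸ h)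
  have hle := Set.ncard_le_ncard_of_injOn f hfN hinj
  have hX := Set.ncard_inter_add_ncard_sdiff_eq_ncard X N
  have hN := Set.ncard_inter_add_ncard_sdiff_eq_ncard N X
  rw [Set.inter_comm] at hN
  omega

lemma SimpleGraph.Walk.exists_isInducedPath_support_subset {a b : V} (p : G.Walk a b) :
    ∃ P : G.Walk a b, IsInducedPath G P ∧ P.support ⊆ p.support := by
  classical
  match p with
  | .nil =>
    refine ⟨.nil, ⟨.nil, fun x y hx hy hxy => ?_⟩, List.Subset.refl _⟩
    simp only [Walk.support_nil, List.mem_singleton] at hx hy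
    exact absurd (hx ▸ hy ▸ hxy) (G.irrefl)
  | .cons (v := c) h p =>
    by_cases ha : a ∈ p.support
    · have := p.length_dropUntil_le_length ha
      obtain ⟨P, hP, hPsupp⟩ := (p.dropUntil a ha).exists_isInducedPath_support_subset
      exact ⟨P, hP, List.Subset.trans hPsupp <| List.subset_cons_of_subset _
        (p.support_dropUntil_subset_support ha)⟩
    by_cases hy : ∃ y ∈ p.support, y ≠ c ∧ G.Adj a y
    · obtain ⟨y, hyp, hyc, hay⟩ := hy
      have := Walk.length_dropUntil_lt_length hyp hyc
      obtain ⟨P, hP, hPsupp⟩ :=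
        (Walk.cons hay (p.dropUntil y hyp)).exists_isInducedPath_support_subset
      refine ⟨P, hP, List.Subset.trans hPsupp ?_⟩
      simpa using List.subset_cons_of_subset _ (p.support_dropUntil_subset_support hyp)
    obtain ⟨P, ⟨hPpath, hPchord⟩, hPsupp⟩ := p.exists_isInducedPath_support_subset
    have haP : a ∉ P.support := fun h => ha (hPsupp h)
    have hchord (y : V) (hy' : y ∈ P.support) (hay : G.Adj a y) : y = c := by
      by_contra hyc
      exact hy ⟨y, hPsupp hy', hyc, hay⟩
    refine ⟨.cons h P, ⟨hPpath.cons haP, fun x y hx hy' hxy => ?_⟩,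
      List.cons_subset_cons _ hPsupp⟩
    simp only [Walk.support_cons, List.mem_cons] at hx hy'
    simp only [Walk.edges_cons, List.mem_cons]
    rcases hx with rfl | hx <;> rcases hy' with rfl | hy'
    · exact absurd hxy (G.irrefl)
    · exact Or.inl (by rw [hchord y hy' hxy])
    · exact Or.inl (by rw [hchord x hx hxy.symm, Sym2.eq_swap])
    · exact Or.inr (hPchord x y hx hy' hxy)
termination_by p.length
decreasing_by all_goals simp only [Walk.length_cons]; omega

lemma IsBlockGraph.isClique_neighborSet (hG : IsBlockGraph G) {z : V}
    (hz : ¬ IsCutVertex G z) :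
    G.IsClique (G.neighborSet z) := by
  intro a (hza : G.Adj z a) b (hzb : G.Adj z b) hab
  by_contra hnab
  obtain ⟨w, hw⟩ := not_not.mp <| mt (isCutVertex_iff.mpr ⟨a, b, hza.ne.symm, hzb.ne.symm, ·⟩) hz
  obtain ⟨P, hP, hPsupp⟩ := w.exists_isInducedPath_support_subset
  have hazb : IsInducedPath G (.cons hza.symm (.cons hzb .nil)) := by
    refine ⟨by simp [hza.ne.symm, hzb.ne, hab], fun x y hx hy hxy => ?_⟩
    simp only [Walk.support_cons, Walk.support_nil, List.mem_cons, List.not_mem_nil,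
      or_false] at hx hy
    simp only [Walk.edges_cons, Walk.edges_nil, List.mem_cons, List.not_mem_nil, or_false]
    rcases hx with rfl | rfl | rfl <;> rcases hy with rfl | rfl | rfl <;>
      simp_all [Sym2.eq_swap, G.adj_comm]
  have hPeq := (hG.2 a b).unique hazb hP
  exact hw (hPsupp (hPeq ▸ by simp))

lemma SimpleGraph.Walk.eq_or_eq_of_isClique_neighborSet {u w z : V} (p : G.Walk u w)
    (hp : p.length = G.dist u w) (hz : G.IsClique (G.neighborSet z)) (hzp : z ∈ p.support) :
    z = u ∨ z = w := by
  by_contra! hne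
  obtain ⟨q, r, rfl⟩ := Walk.mem_support_iff_exists_append.mp hzp
  obtain ⟨a, hza, q', hq'⟩ := Walk.exists_eq_cons_of_ne hne.1 q.reverse
  obtain ⟨b, hzb, r', rfl⟩ := Walk.exists_eq_cons_of_ne hne.2 r
  have hqlen : q.length = q'.length + 1 := by
    rw [← Walk.length_reverse, hq', Walk.length_cons]
  simp only [Walk.length_append, Walk.length_cons, hqlen] at hp
  obtain rfl | hab := eq_or_ne a b
  · have := dist_le (q'.reverse.append r')
    simp only [Walk.length_append, Walk.length_reverse] at this
    omega
  · have := dist_le (q'.reverse.append (.cons (hz hza hzb hab) r'))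
    simp only [Walk.length_append, Walk.length_reverse, Walk.length_cons] at this
    omega

lemma IsBlockGraph.isTMVSet_setOf_not_isCutVertex (hG : IsBlockGraph G) :
    IsTMVSet G {v | ¬ IsCutVertex G v} := by
  intro x y
  obtain ⟨p, -, hp⟩ := (hG.1.preconnected x y).exists_path_of_dist
  exact ⟨p, hp, fun z hz hzX => p.eq_or_eq_of_isClique_neighborSet hp
    (hG.isClique_neighborSet hzX) hz⟩

lemma IsBlockGraph.mu_eq_ncard [Finite V] (hG : IsBlockGraph G) :
    mu G = {v | ¬ IsCutVertex G v}.ncard :=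
  le_antisymm (mu_le_of_forall_ncard_le fun _ hX => hX.ncard_le_ncard_not_isCutVertex hG.1)
    hG.isTMVSet_setOf_not_isCutVertex.isMVSet.ncard_le_mu

end

theorem stmt_16 {V : Type*} [Fintype V] (G : SimpleGraph V) (hG : IsBlockGraph G) :
    mu (strongProd G (SimpleGraph.pathGraph 2)) = Fintype.card V + mu G := by
  rw [← Nat.card_eq_fintype_card]
  refine le_antisymm (mu_le_of_forall_ncard_le fun _ hT => hT.ncard_le_card_add_mu) ?_
  rw [hG.mu_eq_ncard]
  exact hG.isTMVSet_setOf_not_isCutVertex.card_add_ncard_le_mu_strongProd
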